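/- arXiv:1902.00494 — 2 statements merged into one kernel-verified Lean document; each statement's English description precedes it below -/
import Mathlib

section
/- Let $(\Omega_1, \mathcal{F}_1, \mathbb{P}_1)$ and $(\Omega_2, \mathcal{F}_2, \mathbb{P}_2)$ be probability spaces and $(\Omega, \mathcal{F}, \mathbb{P})$ their product. Suppose $(\Omega_2, \mathcal{F}_2, \mathbb{P}_2)$ admits a measurable $F : \Omega_2 \to \mathbb{R}$ such that $F_*\mathbb{P}_2$ has a Lebesgue density and $\mathbb{P}_2$ admits a disintegration with respect to $F_*\mathbb{P}_2$. If $\Gamma \in \mathcal{F}$ satisfies $\mathbb{E}(\mathbf{1}_\Gamma \mid \mathcal{F}_1) \ge p$ $\mathbb{P}$-almost surely for some $p \in (0,1)$, then there exists $\Gamma' \in \mathcal{F}$ with $\Gamma' \subset \Gamma$ and $\mathbb{E}(\mathbf{1}_{\Gamma'} \mid \mathcal{F}_1) = p$ $\mathbb{P}$-almost surely. -/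
/-!
Since `𝔼(1_Γ | 𝓕₁)(ω₁) = ℙ₂(Γ(ω₁))`, it suffices to shrink every section `Γ(ω₁)` of measure
at least `p` to one of measure exactly `p`, measurably in `ω₁`. Because `F` has no atoms, the
function `s ↦ ℙ₂(Γ(ω₁) ∩ {F ≤ s})` is a continuous distribution function, so cutting
`Γ(ω₁)` where it stays `≤ p` leaves measure exactly `p`; this cut is given by one formula in
`(ω₁, ω₂)`, hence is jointly measurable.
-/

open MeasureTheory Set Filter Topology
open scoped ENNReal

lemma tendsto_measure_Iic_nhdsLT (ν : Measure ℝ) (a : ℝ) :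
    Tendsto (fun x => ν (Iic x)) (𝓝[<] a) (𝓝 (ν (Iio a))) := by
  have : (atTop : Filter (Iio a)).IsCountablyGenerated := by
    rw [← comap_coe_Iio_nhdsLT]; infer_instance
  have hunion : (⋃ x : Iio a, Iic (x : ℝ)) = Iio a := by
    ext y
    simp only [mem_iUnion, mem_Iic, mem_Iio, Subtype.exists, exists_prop]
    exact ⟨fun ⟨_, hx, hyx⟩ => hyx.trans_lt hx,
      fun hy => (exists_between hy).imp fun _ h => ⟨h.2, h.1.le⟩⟩
  have h := tendsto_measure_iUnion_atTop (μ := ν) (s := fun x : Iio a => Iic (x : ℝ))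
    fun _ _ hxy => Iic_subset_Iic.2 hxy
  rw [← map_coe_Iio_atTop, tendsto_map'_iff]
  rwa [hunion] at h

lemma tendsto_measure_Iic_nhdsGT (ν : Measure ℝ) [IsFiniteMeasure ν] (a : ℝ) :
    Tendsto (fun x => ν (Iic x)) (𝓝[>] a) (𝓝 (ν (Iic a))) := by
  have hinter : (⋂ r > a, Iic r) = Iic a := by
    ext y
    simp only [mem_iInter, mem_Iic]
    exact ⟨fun h => le_of_forall_gt_imp_ge_of_dense h, fun hy _ h => hy.trans h.le⟩
  rw [← hinter]
  exact tendsto_measure_biInter_gt (fun _ _ => measurableSet_Iic.nullMeasurableSet)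
    (fun _ _ _ h => Iic_subset_Iic.2 h) ⟨a + 1, by linarith, measure_ne_top _ _⟩

lemma continuous_measure_Iic (ν : Measure ℝ) [IsFiniteMeasure ν] [NullSingletonClass ν] :
    Continuous fun x => ν (Iic x) := by
  refine continuous_iff_continuousAt.2 fun a =>
    continuousAt_iff_continuous_left'_right'.2 ⟨?_, tendsto_measure_Iic_nhdsGT ν a⟩
  rw [ContinuousWithinAt, ← measure_congr (Iio_ae_eq_Iic' (measure_singleton a))]
  exact tendsto_measure_Iic_nhdsLT ν a

lemma measure_setOf_measure_Iic_le (ν : Measure ℝ) [IsFiniteMeasure ν] [NullSingletonClass ν]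
    {c : ℝ≥0∞} (hc : c ≤ ν univ) : ν {s | ν (Iic s) ≤ c} = c := by
  set S := {s | ν (Iic s) ≤ c}
  have hmono : Monotone fun x => ν (Iic x) := fun _ _ h => measure_mono (Iic_subset_Iic.2 h)
  have hclosed : IsClosed S := isClosed_le (continuous_measure_Iic ν) continuous_const
  rcases hc.eq_or_lt with rfl | hlt
  · have : S = univ := eq_univ_of_forall fun s => measure_mono (subset_univ (Iic s))
    rw [this]
  obtain ⟨t₁, ht₁⟩ := ((tendsto_measure_Iic_atTop ν).eventually (lt_mem_nhds hlt)).exists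
  rcases S.eq_empty_or_nonempty with hS | hS
  · have hbot := tendsto_measure_iInter_atBot (μ := ν)
      (fun _ => measurableSet_Iic.nullMeasurableSet) monotone_Iic ⟨0, measure_ne_top _ _⟩
    rw [iInter_Iic_eq_empty_iff.2 (by simp [not_bddBelow_univ]), measure_empty] at hbot
    have hc0 : c ≤ 0 := ge_of_tendsto hbot
      (Eventually.of_forall fun s => (not_le.1 fun h => hS.subset h).le)
    rw [hS, measure_empty, nonpos_iff_eq_zero.1 hc0]
  have hbdd : BddAbove S := ⟨t₁, fun s hs => (hmono.reflect_lt (lt_of_le_of_lt hs ht₁)).le⟩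
  set t := sSup S
  have htS : t ∈ S := hclosed.csSup_mem hS hbdd
  have hSt : S = Iic t := Subset.antisymm (fun s hs => le_csSup hbdd hs)
    fun s hs => (hmono hs).trans htS
  have hct : c ≤ ν (Iic t) := ge_of_tendsto (tendsto_measure_Iic_nhdsGT ν t)
    (eventually_nhdsWithin_of_forall fun s hs =>
      (not_le.1 fun hsS => hs.not_ge (le_csSup hbdd hsS)).le)
  rw [hSt]
  exact le_antisymm htS hct

lemma measure_preimage_setOf_measure_preimage_Iic_le {Ω : Type*} [MeasurableSpace Ω]
    (μ : Measure Ω) [IsFiniteMeasure μ] {F : Ω → ℝ} (hF : Measurable F)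
    (hF0 : ∀ s, μ (F ⁻¹' {s}) = 0) {c : ℝ≥0∞} (hc : c ≤ μ univ) :
    μ (F ⁻¹' {s | μ (F ⁻¹' Iic s) ≤ c}) = c := by
  have : NullSingletonClass (μ.map F) :=
    ⟨fun s => by rw [Measure.map_apply hF (measurableSet_singleton s), hF0]⟩
  have hS : MeasurableSet {s | μ.map F (Iic s) ≤ c} :=
    (isClosed_le (continuous_measure_Iic _) continuous_const).measurableSet
  have h := measure_setOf_measure_Iic_le (μ.map F) (c := c)
    (by rwa [Measure.map_apply hF .univ, preimage_univ])
  rw [Measure.map_apply hF hS] at h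
  simpa only [Measure.map_apply hF measurableSet_Iic] using h

theorem exists_subset_forall_measure_prodMk_preimage_eq {Ω₁ Ω₂ : Type*} [MeasurableSpace Ω₁]
    [MeasurableSpace Ω₂] (μ : Measure Ω₂) [IsFiniteMeasure μ] {F : Ω₂ → ℝ} (hF : Measurable F)
    (hF0 : ∀ s, μ (F ⁻¹' {s}) = 0) {Γ : Set (Ω₁ × Ω₂)} (hΓ : MeasurableSet Γ) (c : ℝ≥0∞) :
    ∃ Γ' ⊆ Γ, MeasurableSet Γ' ∧
      ∀ ω₁, c ≤ μ (Prod.mk ω₁ ⁻¹' Γ) → μ (Prod.mk ω₁ ⁻¹' Γ') = c := by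
  -- `G (ω₁, s) = μ (Γ(ω₁) ∩ {F ≤ s})`, written as a section measure to make it jointly measurable
  set G : Ω₁ × ℝ → ℝ≥0∞ := fun z =>
    μ (Prod.mk z ⁻¹' {q : (Ω₁ × ℝ) × Ω₂ | F q.2 ≤ q.1.2 ∧ (q.1.1, q.2) ∈ Γ})
  have hG : Measurable G := measurable_measure_prodMk_left <|
    (measurableSet_le (hF.comp measurable_snd) measurable_fst.snd).inter
      (hΓ.preimage (measurable_fst.fst.prodMk measurable_snd))
  refine ⟨{x | G (x.1, F x.2) ≤ c} ∩ Γ, inter_subset_right,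
    (measurableSet_le (hG.comp (measurable_fst.prodMk (hF.comp measurable_snd)))
      measurable_const).inter hΓ, fun ω₁ hω₁ => ?_⟩
  have hA : MeasurableSet (Prod.mk ω₁ ⁻¹' Γ) := measurable_prodMk_left hΓ
  have h := measure_preimage_setOf_measure_preimage_Iic_le (μ.restrict (Prod.mk ω₁ ⁻¹' Γ)) hF
    (fun s => nonpos_iff_eq_zero.1 ((Measure.restrict_apply_le _ _).trans_eq (hF0 s)))
    (c := c) (by rwa [Measure.restrict_apply_univ])
  simp only [Measure.restrict_apply' hA] at h
  exact h

lemma condExp_indicator_comap_fst_ae_eq {Ω₁ Ω₂ : Type*} [MeasurableSpace Ω₁] [MeasurableSpace Ω₂]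
    (μ₁ : Measure Ω₁) (μ₂ : Measure Ω₂) [IsFiniteMeasure μ₁] [IsProbabilityMeasure μ₂]
    {D : Set (Ω₁ × Ω₂)} (hD : MeasurableSet D) :
    (μ₁.prod μ₂)[D.indicator (fun _ => (1 : ℝ)) | MeasurableSpace.comap Prod.fst inferInstance]
      =ᵐ[μ₁.prod μ₂] fun ω => μ₂.real (Prod.mk ω.1 ⁻¹' D) := by
  have hsec : Measurable fun ω₁ => μ₂.real (Prod.mk ω₁ ⁻¹' D) :=
    (measurable_measure_prodMk_left hD).ennreal_toReal
  have hint : Integrable (fun ω : Ω₁ × Ω₂ => μ₂.real (Prod.mk ω.1 ⁻¹' D)) (μ₁.prod μ₂) :=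
    .of_bound (hsec.comp measurable_fst).aestronglyMeasurable 1
      (.of_forall fun _ => by
        rw [Real.norm_of_nonneg measureReal_nonneg]; exact measureReal_le_one)
  refine (ae_eq_condExp_of_forall_setIntegral_eq measurable_fst.comap_le
    ((integrable_const 1).indicator hD) (fun _ _ _ => hint.integrableOn) ?_
    (hsec.comp (comap_measurable Prod.fst)).aestronglyMeasurable).symm
  rintro _ ⟨B, hB, rfl⟩ _
  have hrestrict : (μ₁.prod μ₂).restrict (Prod.fst ⁻¹' B) = (μ₁.restrict B).prod μ₂ := by
    rw [← prod_univ, ← Measure.prod_restrict, Measure.restrict_univ]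
  rw [hrestrict, integral_fun_fst (fun ω₁ => μ₂.real (Prod.mk ω₁ ⁻¹' D)),
    integral_prod _ ((integrable_const 1).indicator hD)]
  have hslice : ∀ ω₁ ω₂, D.indicator (fun _ => (1 : ℝ)) (ω₁, ω₂)
      = (Prod.mk ω₁ ⁻¹' D).indicator 1 ω₂ := fun _ _ => rfl
  simp only [hslice, integral_indicator_one (measurable_prodMk_left hD), probReal_univ, one_smul]

theorem stmt12_general
    {Ω₁ Ω₂ : Type*} [MeasurableSpace Ω₁] [MeasurableSpace Ω₂]
    (μ₁ : Measure Ω₁) (μ₂ : Measure Ω₂)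
    [IsProbabilityMeasure μ₁] [IsProbabilityMeasure μ₂]
    (F : Ω₂ → ℝ) (hF : Measurable F)
    (ρ : ℝ → ℝ≥0∞)
    (hdens : Measure.map F μ₂ = (volume : Measure ℝ).withDensity ρ)
    (Γ : Set (Ω₁ × Ω₂)) (hΓ : MeasurableSet Γ)
    (p : ℝ) (hp : p ∈ Set.Ioo (0 : ℝ) 1)
    (hge : ∀ᵐ ω ∂(μ₁.prod μ₂),
      p ≤ ((μ₁.prod μ₂)[Set.indicator Γ (fun _ => (1 : ℝ)) |
        MeasurableSpace.comap Prod.fst inferInstance]) ω) :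
    ∃ Γ' : Set (Ω₁ × Ω₂), MeasurableSet Γ' ∧ Γ' ⊆ Γ ∧
      ((μ₁.prod μ₂)[Set.indicator Γ' (fun _ => (1 : ℝ)) |
        MeasurableSpace.comap Prod.fst inferInstance])
        =ᵐ[μ₁.prod μ₂] fun _ => p := by
  have hF0 (s : ℝ) : μ₂ (F ⁻¹' {s}) = 0 := by
    rw [← Measure.map_apply hF (measurableSet_singleton s), hdens, measure_singleton]
  have hΓ_sections : ∀ᵐ ω₁ ∂μ₁, ENNReal.ofReal p ≤ μ₂ (Prod.mk ω₁ ⁻¹' Γ) := by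
    filter_upwards [Measure.ae_ae_of_ae_prod
      (hge.and (condExp_indicator_comap_fst_ae_eq μ₁ μ₂ hΓ))] with ω₁ h
    obtain ⟨_, hle, heq⟩ := h.exists
    rw [heq, measureReal_def] at hle
    exact ENNReal.ofReal_le_of_le_toReal hle
  obtain ⟨Γ', hΓ'Γ, hΓ', hΓ'_sections⟩ :=
    exists_subset_forall_measure_prodMk_preimage_eq μ₂ hF hF0 hΓ (ENNReal.ofReal p)
  refine ⟨Γ', hΓ', hΓ'Γ, ?_⟩
  filter_upwards [condExp_indicator_comap_fst_ae_eq μ₁ μ₂ hΓ',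
    Measure.quasiMeasurePreserving_fst.ae hΓ_sections] with ω h hω
  rw [h, measureReal_def, hΓ'_sections ω.1 hω, ENNReal.toReal_ofReal hp.1.le]

/-- On a product probability space whose second factor carries a function `F`
with absolutely continuous law and a disintegration, any event `Γ` with
`𝔼(1_Γ | 𝓕₁) ≥ p` a.s. contains an event `Γ'` with `𝔼(1_{Γ'} | 𝓕₁) = p` a.s. -/
theorem stmt12
    {Ω₁ Ω₂ : Type*} [MeasurableSpace Ω₁] [MeasurableSpace Ω₂]
    (μ₁ : Measure Ω₁) (μ₂ : Measure Ω₂)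
    [IsProbabilityMeasure μ₁] [IsProbabilityMeasure μ₂]
    (F : Ω₂ → ℝ) (hF : Measurable F)
    (ρ : ℝ → ℝ≥0∞) (hρ : Measurable ρ)
    (hdens : Measure.map F μ₂ = (volume : Measure ℝ).withDensity ρ)
    (P : ℝ → Measure Ω₂)
    (hPprob : ∀ s, IsProbabilityMeasure (P s))
    (hPmeas : ∀ A : Set Ω₂, MeasurableSet A → Measurable fun s => P s A)
    (hdisint : ∀ (A : Set Ω₂) (B : Set ℝ), MeasurableSet A → MeasurableSet B →
      μ₂ (A ∩ F ⁻¹' B) = ∫⁻ s in B, P s A ∂(Measure.map F μ₂))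
    (Γ : Set (Ω₁ × Ω₂)) (hΓ : MeasurableSet Γ)
    (p : ℝ) (hp : p ∈ Set.Ioo (0 : ℝ) 1)
    (hge : ∀ᵐ ω ∂(μ₁.prod μ₂),
      p ≤ ((μ₁.prod μ₂)[Set.indicator Γ (fun _ => (1 : ℝ)) |
        MeasurableSpace.comap Prod.fst inferInstance]) ω) :
    ∃ Γ' : Set (Ω₁ × Ω₂), MeasurableSet Γ' ∧ Γ' ⊆ Γ ∧
      ((μ₁.prod μ₂)[Set.indicator Γ' (fun _ => (1 : ℝ)) |
        MeasurableSpace.comap Prod.fst inferInstance])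
        =ᵐ[μ₁.prod μ₂] fun _ => p :=
  stmt12_general μ₁ μ₂ F hF ρ hdens Γ hΓ p hp hge
end

section
/- Let $\mathcal{I} \subset \mathbb{Z}^3$ be a finite symmetric set ($-\mathcal{I} = \mathcal{I}$) containing the origin, and let $\mathcal{H}(\mathcal{I}) = \mathrm{span}\{e_l : l \in \mathcal{I}\}$ in $L^2(\mathbb{T}^3)$, where $\{e_l\}$ is the real trigonometric basis. Define $\mathcal{H}_0 = \mathcal{H}(\mathcal{I})$ and $\mathcal{H}_{k+1} = \mathrm{span}\{\eta, \zeta\xi : \eta, \zeta \in \mathcal{H}_k, \xi \in \mathcal{H}(\mathcal{I})\}$. If $\mathcal{I}$ generates $\mathbb{Z}^3$ as a group, then $\bigcup_{k \ge 0} \mathcal{H}_k$ is dense in $L^2(\mathbb{T}^3)$; conversely, if $\mathcal{I}$ does not generate $\mathbb{Z}^3$, then $\bigcup_{k \ge 0} \mathcal{H}_k$ is not dense in $L^2(\mathbb{T}^3)$. -/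
open MeasureTheory
open scoped ENNReal

noncomputable section

local instance : Fact (0 < 2 * Real.pi) := ⟨by positivity⟩

/-- The three-dimensional torus `𝕋³`. -/
abbrev Torus3 := Fin 3 → AddCircle (2 * Real.pi)

/-- `c_l(x) = cos⟨l, x⟩` on the torus, realised as the real part of `exp(i⟨l,x⟩)`. -/
def cmode3 (l : Fin 3 → ℤ) (x : Torus3) : ℝ := (∏ i, fourier (l i) (x i)).re

/-- `s_l(x) = sin⟨l, x⟩` on the torus, realised as the imaginary part of `exp(i⟨l,x⟩)`. -/
def smode3 (l : Fin 3 → ℤ) (x : Torus3) : ℝ := (∏ i, fourier (l i) (x i)).im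

/-- The sign convention for the real trigonometric basis: cosine when the first nonzero
coordinate of `l` is positive (or `l = 0`), sine otherwise. -/
def isCosMode (l : Fin 3 → ℤ) : Prop :=
  0 < l 0 ∨ (l 0 = 0 ∧ 0 < l 1) ∨ (l 0 = 0 ∧ l 1 = 0 ∧ 0 ≤ l 2)

open Classical in
/-- The real trigonometric basis function `e_l`. -/
def emode3 (l : Fin 3 → ℤ) : Torus3 → ℝ :=
  if isCosMode l then cmode3 l else smode3 l

/-- The subspace `𝓗(𝓘) = span{e_l : l ∈ 𝓘}` of functions on the torus. -/
def Hspace (I : Set (Fin 3 → ℤ)) : Submodule ℝ (Torus3 → ℝ) :=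
  Submodule.span ℝ (emode3 '' I)

/-- The saturation hierarchy: `𝓗₀ = 𝓗(𝓘)`,
`𝓗_{k+1} = span{η, ζ·ξ : η, ζ ∈ 𝓗_k, ξ ∈ 𝓗(𝓘)}`. -/
def Hseq (I : Set (Fin 3 → ℤ)) : ℕ → Submodule ℝ (Torus3 → ℝ)
  | 0 => Hspace I
  | k + 1 => Submodule.span ℝ
      ({f | f ∈ Hseq I k} ∪
        {g | ∃ ζ ∈ Hseq I k, ∃ ξ ∈ Hspace I, g = fun x => ζ x * ξ x})

/-!
The union `⋃ₖ 𝓗ₖ` is the algebra generated by the `e_l`, `l ∈ 𝓘`. The addition formulas for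
`cos` and `sin` show that the frequencies `l` with `c_l` and `s_l` in a subalgebra form a
subgroup of `ℤ³`; so if `𝓘` generates `ℤ³`, the algebra contains every `c_l`, `s_l`, hence
separates points, and Stone–Weierstrass together with the density of `C(𝕋³)` in `L²(𝕋³)`
gives density. Conversely, by the product-to-sum formulas the trigonometric polynomials with
frequencies in the subgroup `G` generated by `𝓘` form an algebra, so they contain every `𝓗ₖ`;
for `m ∉ G` they are all orthogonal to `c_m`, which is not zero in `L²`.
-/

open scoped ComplexConjugate

def torusChar (l : Fin 3 → ℤ) (x : Torus3) : ℂ := ∏ i, fourier (l i) (x i)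

section Characters

variable (l m : Fin 3 → ℤ) (x : Torus3)

lemma torusChar_add : torusChar (l + m) x = torusChar l x * torusChar m x := by
  simp only [torusChar, Pi.add_apply, fourier_add, Finset.prod_mul_distrib]

lemma torusChar_neg : torusChar (-l) x = conj (torusChar l x) := by
  simp only [torusChar, Pi.neg_apply, fourier_neg, map_prod]

lemma torusChar_zero : torusChar 0 x = 1 := by
  simp [torusChar]

lemma continuous_torusChar : Continuous (torusChar l) :=
  continuous_finsetProd _ fun i _ => (map_continuous (fourier (l i))).comp (continuous_apply i)

lemma integral_torusChar_eq_zero {l : Fin 3 → ℤ} (hl : l ≠ 0) : ∫ x, torusChar l x = 0 := by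
  obtain ⟨i, hi⟩ := Function.ne_iff.1 hl
  rw [show (∫ x, torusChar l x) = ∫ x : Torus3, ∏ i, fourier (l i) (x i) from rfl,
    integral_fintype_prod_volume_eq_prod (fun i x => fourier (l i) x)]
  refine Finset.prod_eq_zero (Finset.mem_univ i) ?_
  exact integral_eq_zero_of_add_right_eq_neg (fourier_add_half_inv_index hi (by positivity))

lemma exists_torusChar_ne {x y : Torus3} (hxy : x ≠ y) :
    ∃ l, torusChar l x ≠ torusChar l y := by
  obtain ⟨i, hi⟩ := Function.ne_iff.1 hxy
  have hchar (z : Torus3) : torusChar (Pi.single i 1) z = AddCircle.toCircle (z i) := by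
    rw [torusChar, Finset.prod_eq_single i (fun j _ hj => by simp [Pi.single_eq_of_ne hj])
      (by simp), Pi.single_eq_same, fourier_one]
  refine ⟨Pi.single i 1, fun h => hi ?_⟩
  rw [hchar, hchar] at h
  exact AddCircle.injective_toCircle (by positivity) (Circle.coe_injective h)

lemma cmode3_eq_re : cmode3 l x = (torusChar l x).re := rfl

lemma smode3_eq_im : smode3 l x = (torusChar l x).im := rfl

lemma cmode3_add : cmode3 (l + m) x = cmode3 l x * cmode3 m x - smode3 l x * smode3 m x := by
  simp only [cmode3_eq_re, smode3_eq_im, torusChar_add, Complex.mul_re]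

lemma smode3_add : smode3 (l + m) x = smode3 l x * cmode3 m x + cmode3 l x * smode3 m x := by
  simp only [cmode3_eq_re, smode3_eq_im, torusChar_add, Complex.mul_im]; ring

lemma cmode3_neg : cmode3 (-l) x = cmode3 l x := by
  simp only [cmode3_eq_re, torusChar_neg, Complex.conj_re]

lemma smode3_neg : smode3 (-l) x = -smode3 l x := by
  simp only [smode3_eq_im, torusChar_neg, Complex.conj_im]

lemma cmode3_zero : cmode3 0 x = 1 := by
  simp [cmode3_eq_re, torusChar_zero]

lemma smode3_zero : smode3 0 x = 0 := by
  simp [smode3_eq_im, torusChar_zero]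

lemma cmode3_apply_zero : cmode3 l 0 = 1 := by
  simp [cmode3_eq_re, torusChar]

lemma continuous_cmode3 : Continuous (cmode3 l) :=
  Complex.continuous_re.comp (continuous_torusChar l)

lemma continuous_smode3 : Continuous (smode3 l) :=
  Complex.continuous_im.comp (continuous_torusChar l)

end Characters

section ProductToSum

variable (l m : Fin 3 → ℤ)

lemma cmode3_mul_cmode3 :
    cmode3 l * cmode3 m = (2⁻¹ : ℝ) • (cmode3 (l + m) + cmode3 (l - m)) := by
  funext x
  simp only [Pi.mul_apply, Pi.smul_apply, Pi.add_apply, smul_eq_mul, sub_eq_add_neg l m, cmode3_add,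
    cmode3_neg, smode3_neg]
  ring

lemma cmode3_mul_smode3 :
    cmode3 l * smode3 m = (2⁻¹ : ℝ) • (smode3 (l + m) - smode3 (l - m)) := by
  funext x
  simp only [Pi.mul_apply, Pi.smul_apply, Pi.sub_apply, smul_eq_mul, sub_eq_add_neg l m, smode3_add,
    cmode3_neg, smode3_neg]
  ring

lemma smode3_mul_cmode3 :
    smode3 l * cmode3 m = (2⁻¹ : ℝ) • (smode3 (l + m) + smode3 (l - m)) := by
  funext x
  simp only [Pi.mul_apply, Pi.smul_apply, Pi.add_apply, smul_eq_mul, sub_eq_add_neg l m, smode3_add,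
    cmode3_neg, smode3_neg]
  ring

lemma smode3_mul_smode3 :
    smode3 l * smode3 m = (2⁻¹ : ℝ) • (cmode3 (l - m) - cmode3 (l + m)) := by
  funext x
  simp only [Pi.mul_apply, Pi.smul_apply, Pi.sub_apply, smul_eq_mul, sub_eq_add_neg l m, cmode3_add,
    cmode3_neg, smode3_neg]
  ring

end ProductToSum

section Modes

lemma isCosMode_zero : isCosMode 0 := by simp [isCosMode]

lemma isCosMode_neg_iff {l : Fin 3 → ℤ} (hl : l ≠ 0) : isCosMode (-l) ↔ ¬ isCosMode l := by
  have : ¬ (l 0 = 0 ∧ l 1 = 0 ∧ l 2 = 0) := fun h =>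
    hl (funext fun i => by fin_cases i <;> simp [h.1, h.2.1, h.2.2])
  simp only [isCosMode, Pi.neg_apply]
  omega

lemma emode3_zero : emode3 0 = 1 := by
  funext x
  simp [emode3, isCosMode_zero, cmode3_zero]

/-- On a symmetric set, `e_l` and `e_{-l}` are `c_l` and `±s_l` in some order. -/
lemma cmode3_mem_Hspace_and_smode3_mem_Hspace {I : Set (Fin 3 → ℤ)} (hsym : ∀ l ∈ I, -l ∈ I)
    {l : Fin 3 → ℤ} (hl : l ∈ I) : cmode3 l ∈ Hspace I ∧ smode3 l ∈ Hspace I := by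
  classical
  have he : ∀ n ∈ I, emode3 n ∈ Hspace I := fun n hn => Submodule.subset_span ⟨n, hn, rfl⟩
  rcases eq_or_ne l 0 with rfl | hl0
  · refine ⟨?_, ?_⟩
    · simpa [emode3, isCosMode_zero] using he 0 hl
    · rw [show smode3 0 = 0 from funext smode3_zero]; exact zero_mem _
  have hneg := he (-l) (hsym l hl)
  by_cases hc : isCosMode l
  · have hc' : ¬ isCosMode (-l) := by rwa [isCosMode_neg_iff hl0, not_not]
    refine ⟨by simpa [emode3, hc] using he l hl, ?_⟩
    simpa [emode3, hc', show smode3 (-l) = -smode3 l from funext (smode3_neg l)] using neg_mem hneg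
  · have hc' : isCosMode (-l) := (isCosMode_neg_iff hl0).2 hc
    refine ⟨?_, by simpa [emode3, hc] using he l hl⟩
    simpa [emode3, hc', show cmode3 (-l) = cmode3 l from funext (cmode3_neg l)] using hneg

end Modes

def trigSpan (G : AddSubgroup (Fin 3 → ℤ)) : Submodule ℝ (Torus3 → ℝ) :=
  Submodule.span ℝ (cmode3 '' G ∪ smode3 '' G)

section TrigSpan

variable {G : AddSubgroup (Fin 3 → ℤ)} {l : Fin 3 → ℤ}

lemma cmode3_mem_trigSpan (hl : l ∈ G) : cmode3 l ∈ trigSpan G :=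
  Submodule.subset_span (Or.inl ⟨l, hl, rfl⟩)

lemma smode3_mem_trigSpan (hl : l ∈ G) : smode3 l ∈ trigSpan G :=
  Submodule.subset_span (Or.inr ⟨l, hl, rfl⟩)

lemma emode3_mem_trigSpan (hl : l ∈ G) : emode3 l ∈ trigSpan G := by
  classical
  unfold emode3
  split_ifs
  exacts [cmode3_mem_trigSpan hl, smode3_mem_trigSpan hl]

lemma mul_mem_trigSpan {f g : Torus3 → ℝ} (hf : f ∈ trigSpan G) (hg : g ∈ trigSpan G) :
    f * g ∈ trigSpan G := by
  have hle : trigSpan G * trigSpan G ≤ trigSpan G := by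
    rw [trigSpan, Submodule.span_mul_span, Submodule.span_le]
    rintro _ ⟨f, ⟨l, hl, rfl⟩ | ⟨l, hl, rfl⟩, g, ⟨m, hm, rfl⟩ | ⟨m, hm, rfl⟩, rfl⟩
    all_goals
      dsimp only
      have hadd := G.add_mem hl hm
      have hsub := G.sub_mem hl hm
    · rw [cmode3_mul_cmode3]
      exact Submodule.smul_mem _ _ (add_mem (cmode3_mem_trigSpan hadd) (cmode3_mem_trigSpan hsub))
    · rw [cmode3_mul_smode3]
      exact Submodule.smul_mem _ _ (sub_mem (smode3_mem_trigSpan hadd) (smode3_mem_trigSpan hsub))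
    · rw [smode3_mul_cmode3]
      exact Submodule.smul_mem _ _ (add_mem (smode3_mem_trigSpan hadd) (smode3_mem_trigSpan hsub))
    · rw [smode3_mul_smode3]
      exact Submodule.smul_mem _ _ (sub_mem (cmode3_mem_trigSpan hsub) (cmode3_mem_trigSpan hadd))
  exact hle (Submodule.mul_mem_mul hf hg)

end TrigSpan

/-- Continuity is part of the definition because `∫` is additive only on integrable functions. -/
def meanZero : Submodule ℝ (Torus3 → ℝ) where
  carrier := {f | Continuous f ∧ ∫ x, f x = 0}
  zero_mem' := ⟨continuous_const, integral_zero _ _⟩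
  add_mem' := fun {f g} ⟨hf, hf0⟩ ⟨hg, hg0⟩ => by
    refine ⟨hf.add hg, ?_⟩
    rw [Pi.add_def, integral_add (hf.integrable_of_hasCompactSupport (.of_compactSpace f))
      (hg.integrable_of_hasCompactSupport (.of_compactSpace g)), hf0, hg0, add_zero]
  smul_mem' := fun c f ⟨hf, hf0⟩ => ⟨hf.const_smul c, by
    rw [Pi.smul_def, integral_smul, hf0, smul_zero]⟩

lemma cmode3_mem_meanZero {l : Fin 3 → ℤ} (hl : l ≠ 0) : cmode3 l ∈ meanZero := by
  refine ⟨continuous_cmode3 l, ?_⟩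
  have h := integral_re ((continuous_torusChar l).integrable_of_hasCompactSupport (μ := volume)
    (.of_compactSpace _))
  rwa [integral_torusChar_eq_zero hl, map_zero] at h

lemma smode3_mem_meanZero {l : Fin 3 → ℤ} (hl : l ≠ 0) : smode3 l ∈ meanZero := by
  refine ⟨continuous_smode3 l, ?_⟩
  have h := integral_im ((continuous_torusChar l).integrable_of_hasCompactSupport (μ := volume)
    (.of_compactSpace _))
  rwa [integral_torusChar_eq_zero hl, map_zero] at h

lemma trigSpan_le_comap_mulLeft_cmode3 {G : AddSubgroup (Fin 3 → ℤ)} {m : Fin 3 → ℤ} (hm : m ∉ G) :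
    trigSpan G ≤ meanZero.comap (LinearMap.mulLeft ℝ (cmode3 m)) := by
  rw [trigSpan, Submodule.span_le]
  rintro _ (⟨l, hl, rfl⟩ | ⟨l, hl, rfl⟩) <;> simp only [SetLike.mem_coe, Submodule.mem_comap,
    LinearMap.mulLeft_apply]
  all_goals
    have hadd : m + l ≠ 0 := fun h => hm (neg_eq_of_add_eq_zero_left h ▸ G.neg_mem hl)
    have hsub : m - l ≠ 0 := fun h => hm (sub_eq_zero.1 h ▸ hl)
  · rw [cmode3_mul_cmode3]
    exact meanZero.smul_mem _ (add_mem (cmode3_mem_meanZero hadd) (cmode3_mem_meanZero hsub))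
  · rw [cmode3_mul_smode3]
    exact meanZero.smul_mem _ (sub_mem (smode3_mem_meanZero hadd) (smode3_mem_meanZero hsub))

section Saturation

variable {I : Set (Fin 3 → ℤ)}

lemma Hseq_mono (I : Set (Fin 3 → ℤ)) : Monotone (Hseq I) :=
  monotone_nat_of_le_succ fun _ _ hf => Submodule.subset_span (Or.inl hf)

lemma mul_mem_Hseq {j k : ℕ} {f g : Torus3 → ℝ} (hf : f ∈ Hseq I j) (hg : g ∈ Hseq I k) :
    f * g ∈ Hseq I (j + k + 1) := by
  induction k generalizing g with
  | zero => exact Submodule.subset_span (Or.inr ⟨f, hf, g, hg, rfl⟩)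
  | succ k ih =>
    induction hg using Submodule.span_induction with
    | mem g hg =>
      rcases hg with hg | ⟨ζ, hζ, ξ, hξ, rfl⟩
      · exact Hseq_mono I (by omega) (ih hg)
      · exact Submodule.subset_span (Or.inr ⟨f * ζ, ih hζ, ξ, hξ, by funext x; simp [mul_assoc]⟩)
    | zero => simp
    | add g₁ g₂ _ _ ih₁ ih₂ => simpa [mul_add] using add_mem ih₁ ih₂
    | smul c g _ ih => simpa [mul_smul_comm] using Submodule.smul_mem _ c ih

lemma Hseq_le_of_mul_mem {M : Submodule ℝ (Torus3 → ℝ)} (hI : Hspace I ≤ M)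
    (hM : ∀ f ∈ M, ∀ g ∈ M, f * g ∈ M) (k : ℕ) : Hseq I k ≤ M := by
  induction k with
  | zero => exact hI
  | succ k ih =>
    rw [Hseq, Submodule.span_le]
    rintro f (hf | ⟨ζ, hζ, ξ, hξ, rfl⟩)
    exacts [ih hf, hM ζ (ih hζ) ξ (hI hξ)]

lemma mem_iSup_Hseq {f : Torus3 → ℝ} : f ∈ ⨆ k, Hseq I k ↔ ∃ k, f ∈ Hseq I k :=
  Submodule.mem_iSup_of_directed _ (Hseq_mono I).directed_le

def saturationAlgebra (h0 : (0 : Fin 3 → ℤ) ∈ I) : Subalgebra ℝ (Torus3 → ℝ) :=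
  (⨆ k, Hseq I k).toSubalgebra
    (mem_iSup_Hseq.2 ⟨0, emode3_zero ▸ Submodule.subset_span ⟨0, h0, rfl⟩⟩)
    fun _ _ hf hg => by
      obtain ⟨j, hj⟩ := mem_iSup_Hseq.1 hf
      obtain ⟨k, hk⟩ := mem_iSup_Hseq.1 hg
      exact mem_iSup_Hseq.2 ⟨_, mul_mem_Hseq hj hk⟩

end Saturation

def modeSubgroup (A : Subalgebra ℝ (Torus3 → ℝ)) : AddSubgroup (Fin 3 → ℤ) where
  carrier := {l | cmode3 l ∈ A ∧ smode3 l ∈ A}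
  add_mem' := fun {l m} ⟨hcl, hsl⟩ ⟨hcm, hsm⟩ => by
    rw [Set.mem_ofPred_eq, show cmode3 (l + m) = cmode3 l * cmode3 m - smode3 l * smode3 m from
      funext (cmode3_add l m), show smode3 (l + m) = smode3 l * cmode3 m + cmode3 l * smode3 m from
      funext (smode3_add l m)]
    exact ⟨sub_mem (mul_mem hcl hcm) (mul_mem hsl hsm), add_mem (mul_mem hsl hcm) (mul_mem hcl hsm)⟩
  zero_mem' := by
    rw [Set.mem_ofPred_eq, show cmode3 0 = 1 from funext cmode3_zero,
      show smode3 0 = 0 from funext smode3_zero]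
    exact ⟨one_mem A, zero_mem A⟩
  neg_mem' := fun {l} ⟨hc, hs⟩ => by
    rw [Set.mem_ofPred_eq, show cmode3 (-l) = cmode3 l from funext (cmode3_neg l),
      show smode3 (-l) = -smode3 l from funext (smode3_neg l)]
    exact ⟨hc, neg_mem hs⟩

lemma dense_of_modeSubgroup_eq_top {A : Subalgebra ℝ (Torus3 → ℝ)} (hA : modeSubgroup A = ⊤) :
    Dense {g : Lp ℝ 2 (volume : Measure Torus3) | ∃ f ∈ A, (g : Torus3 → ℝ) =ᵐ[volume] f} := by
  set B := A.comap (ContinuousMap.coeFnAlgHom ℝ)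
  have hsep : B.SeparatesPoints := by
    intro x y hxy
    obtain ⟨l, hl⟩ := exists_torusChar_ne hxy
    have hmem : l ∈ modeSubgroup A := hA ▸ AddSubgroup.mem_top l
    by_cases hc : cmode3 l x = cmode3 l y
    · exact ⟨smode3 l, ⟨⟨smode3 l, continuous_smode3 l⟩, hmem.2, rfl⟩,
        fun hs => hl (Complex.ext hc hs)⟩
    · exact ⟨cmode3 l, ⟨⟨cmode3 l, continuous_cmode3 l⟩, hmem.1, rfl⟩, hc⟩
  have hB : Dense (B : Set C(Torus3, ℝ)) := by
    rw [dense_iff_closure_eq, ← Subalgebra.topologicalClosure_coe,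
      ContinuousMap.subalgebra_topologicalClosure_eq_top_of_separatesPoints B hsep,
      Algebra.coe_top]
  refine ((ContinuousMap.toLp_denseRange ℝ volume ℝ (p := 2) (by norm_num)).dense_image
    (ContinuousMap.toLp 2 volume ℝ).continuous hB).mono ?_
  rintro _ ⟨f, hf, rfl⟩
  exact ⟨f, hf, ContinuousMap.coeFn_toLp volume f⟩

section Density

variable {I : Set (Fin 3 → ℤ)}

theorem dense_of_closure_eq_top (hsym : ∀ l ∈ I, -l ∈ I) (h0 : (0 : Fin 3 → ℤ) ∈ I)
    (hI : AddSubgroup.closure I = ⊤) :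
    Dense {g : Lp ℝ 2 (volume : Measure Torus3) |
      ∃ k : ℕ, ∃ f ∈ Hseq I k, (g : Torus3 → ℝ) =ᵐ[volume] f} := by
  have hmodes : modeSubgroup (saturationAlgebra h0) = ⊤ := by
    refine eq_top_iff.2 (hI ▸ (AddSubgroup.closure_le _).2 fun l hl => ?_)
    obtain ⟨hc, hs⟩ := cmode3_mem_Hspace_and_smode3_mem_Hspace hsym hl
    exact ⟨mem_iSup_Hseq.2 ⟨0, hc⟩, mem_iSup_Hseq.2 ⟨0, hs⟩⟩
  refine (dense_of_modeSubgroup_eq_top hmodes).mono ?_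
  rintro g ⟨f, hf, hgf⟩
  obtain ⟨k, hk⟩ := mem_iSup_Hseq.1 hf
  exact ⟨k, f, hk, hgf⟩

theorem not_dense_of_closure_ne_top (hI : AddSubgroup.closure I ≠ ⊤) :
    ¬ Dense {g : Lp ℝ 2 (volume : Measure Torus3) |
      ∃ k : ℕ, ∃ f ∈ Hseq I k, (g : Torus3 → ℝ) =ᵐ[volume] f} := by
  intro hd
  obtain ⟨m, hm⟩ := SetLike.exists_not_mem_of_ne_top _ hI
  have hHseq (k : ℕ) : Hseq I k ≤ trigSpan (AddSubgroup.closure I) :=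
    Hseq_le_of_mul_mem (Submodule.span_le.2 <| Set.image_subset_iff.2 fun l hl =>
      emode3_mem_trigSpan (AddSubgroup.subset_closure hl))
      (fun _ hf _ hg => mul_mem_trigSpan hf hg) k
  let c : C(Torus3, ℝ) := ⟨cmode3 m, continuous_cmode3 m⟩
  have hc : ContinuousMap.toLp 2 volume ℝ c = 0 := by
    refine hd.eq_zero_of_inner_left ℝ fun g ⟨k, f, hf, hgf⟩ => ?_
    have horth := (trigSpan_le_comap_mulLeft_cmode3 hm (hHseq k hf)).2
    rw [MeasureTheory.L2.inner_def, ← horth]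
    refine integral_congr_ae ?_
    filter_upwards [ContinuousMap.coeFn_toLp (p := 2) (𝕜 := ℝ) volume c, hgf] with x hcx hgx
    rw [hcx, hgx]
    simp [c, mul_comm]
  have hc0 : c = 0 := (ContinuousMap.toLp_injective volume) (hc.trans (map_zero _).symm)
  simpa [c, cmode3_apply_zero] using DFunLike.congr_fun hc0 0

end Density

/-- For a finite symmetric set `𝓘 ∋ 0`, the union `⋃ₖ 𝓗ₖ` is dense in
`L²(𝕋³)` if `𝓘` generates `ℤ³`, and is not dense if `𝓘` does not generate `ℤ³`. -/
theorem stmt15 (I : Finset (Fin 3 → ℤ))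
    (hsym : ∀ l ∈ I, -l ∈ I) (h0 : (0 : Fin 3 → ℤ) ∈ I) :
    (AddSubgroup.closure (I : Set (Fin 3 → ℤ)) = ⊤ →
      Dense {g : Lp ℝ 2 (volume : Measure Torus3) |
        ∃ k : ℕ, ∃ f ∈ Hseq (I : Set (Fin 3 → ℤ)) k, (g : Torus3 → ℝ) =ᵐ[volume] f}) ∧
    (AddSubgroup.closure (I : Set (Fin 3 → ℤ)) ≠ ⊤ →
      ¬ Dense {g : Lp ℝ 2 (volume : Measure Torus3) |
        ∃ k : ℕ, ∃ f ∈ Hseq (I : Set (Fin 3 → ℤ)) k, (g : Torus3 → ℝ) =ᵐ[volume] f}) :=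
  ⟨dense_of_closure_eq_top hsym h0, not_dense_of_closure_ne_top⟩

end
end
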